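/- arXiv:1604.01477 — 2 statements merged into one kernel-verified Lean document; each statement's English description precedes it below -/
import Mathlib

section
/- Let r ≤ n and let Sh(r, n−r) ⊂ 𝔖ₙ denote the set of (r, n−r)-shuffles. For any symmetric polynomial f ∈ ℚ[λ₁,…,λₙ]^{𝔖ᵣ×𝔖_{n−r}} (symmetric separately in λ₁,…,λᵣ and in λ_{r+1},…,λₙ), the rational function ∑_{σ ∈ Sh(r,n−r)} σ( f / ∏_{1≤j≤r, r+1≤i≤n}(λᵢ − λⱼ) ) is a polynomial, and it is symmetric under the full group 𝔖ₙ. -/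
open MvPolynomial Equiv

noncomputable section

/-- The polynomial ring `ℚ[λ₁,…,λₙ]`. -/
abbrev PolyS (n : ℕ) := MvPolynomial (Fin n) ℚ

/-- Its field of fractions (rational functions). -/
abbrev FracK (n : ℕ) := FractionRing (PolyS n)

/-- The action of a permutation of the variables on the field of rational functions. -/
def permAct (n : ℕ) (σ : Perm (Fin n)) : FracK n ≃+* FracK n :=
  IsFractionRing.ringEquivOfRingEquiv (renameEquiv ℚ σ).toRingEquiv

/-- The set of `(r, n-r)`-shuffles in `𝔖ₙ`: permutations strictly increasing on the first
block `{0,…,r-1}` and on the second block `{r,…,n-1}`. -/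
def shuffles (n r : ℕ) : Finset (Perm (Fin n)) :=
  Finset.univ.filter fun σ =>
    ∀ i j : Fin n, i < j → ((j : ℕ) < r ∨ r ≤ (i : ℕ)) → σ i < σ j

/-- The Euler factor `∏_{1≤j≤r, r+1≤i≤n} (λᵢ - λⱼ)`. -/
def euFactor (n r : ℕ) : PolyS n :=
  ∏ p ∈ Finset.univ.filter (fun p : Fin n × Fin n => (p.1 : ℕ) < r ∧ r ≤ (p.2 : ℕ)),
    (X p.2 - X p.1)

/-!
Let `H ≅ 𝔖ᵣ × 𝔖ₙ₋ᵣ` be the block-preserving permutations. Every permutation factors uniquely as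
`σ * h` with `σ` a shuffle and `h ∈ H`: in a coset `g * H` the element maximising `∑ i * σ i` has
no inversion inside a block. Since `f / euFactor` is `H`-invariant, the shuffle sum is `1 / #H`
times the full symmetrisation, hence invariant under all of `𝔖ₙ`.

Each `σ (euFactor)` divides the Vandermonde product `V` up to sign, so the shuffle sum times `V` is
a polynomial `P`. As `V` is antisymmetric, so is `P`; then `P` vanishes on `λ_a = λ_b`, so it is
divisible by each of the pairwise non-associated primes `λ_b - λ_a`, hence by `V`.
-/

open Finset

section Vandermonde

variable {R : Type*} [CommRing R] {n : ℕ}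

variable (R n) in
def vandermondePoly : MvPolynomial (Fin n) R :=
  ∏ p ∈ univ.filter (fun p : Fin n × Fin n => p.1 < p.2), (X p.2 - X p.1)

theorem vandermondePoly_eq_det :
    vandermondePoly R n = (Matrix.vandermonde (X : Fin n → MvPolynomial (Fin n) R)).det := by
  rw [Matrix.det_vandermonde, vandermondePoly, prod_filter, Fintype.prod_prod_type]
  refine prod_congr rfl fun i _ => ?_
  rw [← filter_lt_eq_Ioi, prod_filter]

theorem rename_vandermondePoly (σ : Perm (Fin n)) :
    rename σ (vandermondePoly R n) = Perm.sign σ * vandermondePoly R n := by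
  rw [vandermondePoly_eq_det, AlgHom.map_det, ← Matrix.det_permute]
  congr 1
  ext i j
  simp [Matrix.vandermonde]

end Vandermonde

section Collapse

variable {R κ : Type*} [CommRing R] [DecidableEq κ]

theorem X_sub_X_dvd_sub_rename_update (a b : κ) (P : MvPolynomial κ R) :
    X b - X a ∣ P - rename (Function.update id b a) P := by
  rw [← Ideal.mem_span_singleton, ← Ideal.Quotient.eq]
  set I := Ideal.span {(X b - X a : MvPolynomial κ R)}
  have : (Ideal.Quotient.mkₐ R I).comp (rename (Function.update id b a)) =
      Ideal.Quotient.mkₐ R I := by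
    refine algHom_ext fun k => ?_
    rcases eq_or_ne k b with rfl | hk
    · simp only [AlgHom.comp_apply, rename_X, Function.update_self, Ideal.Quotient.mkₐ_eq_mk]
      exact Ideal.Quotient.eq.mpr (Ideal.mem_span_singleton.mpr ⟨-1, by ring⟩)
    · simp [Function.update_of_ne hk]
  exact (AlgHom.congr_fun this P).symm

theorem X_sub_X_dvd_iff_rename_update_eq_zero (a b : κ) (P : MvPolynomial κ R) :
    X b - X a ∣ P ↔ rename (Function.update id b a) P = 0 := by
  refine ⟨fun ⟨Q, hQ⟩ => by simp [hQ, Function.update_apply], fun h => ?_⟩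
  simpa [h] using X_sub_X_dvd_sub_rename_update a b P

theorem prime_X_sub_X [IsDomain R] {a b : κ} (hab : a ≠ b) :
    Prime (X b - X a : MvPolynomial κ R) := by
  have hker : RingHom.ker (rename (R := R) (Function.update id b a)) =
      Ideal.span {X b - X a} := by
    ext P
    rw [RingHom.mem_ker, Ideal.mem_span_singleton, X_sub_X_dvd_iff_rename_update_eq_zero]
  have hne : (X b - X a : MvPolynomial κ R) ≠ 0 := sub_ne_zero.mpr (X_injective.ne hab.symm)
  exact (Ideal.span_singleton_prime hne).mp (hker ▸ RingHom.ker_isPrime _)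

theorem X_sub_X_dvd_of_rename_swap [IsDomain R] [CharZero R] {a b : κ} {P : MvPolynomial κ R}
    (hP : rename (swap a b) P = -P) : X b - X a ∣ P := by
  rw [X_sub_X_dvd_iff_rename_update_eq_zero]
  have hswap : Function.update id b a ∘ swap a b = Function.update id b a := by
    ext k
    simp only [Function.comp_apply, Function.update_apply, id, swap_apply_def]
    split_ifs <;> simp_all
  refine self_eq_neg.mp ?_
  rw [← map_neg, ← hP, rename_rename, hswap]

end Collapse

section Antisymmetric

variable {R : Type*} [CommRing R] [IsDomain R] {n : ℕ}

theorem not_X_sub_X_dvd_X_sub_X {p q : Fin n × Fin n} (hp : p.1 < p.2) (hq : q.1 < q.2)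
    (hpq : p ≠ q) : ¬ (X p.2 - X p.1 : MvPolynomial (Fin n) R) ∣ X q.2 - X q.1 := by
  rw [X_sub_X_dvd_iff_rename_update_eq_zero, map_sub, rename_X, rename_X, sub_eq_zero]
  intro h
  have := X_injective h
  simp only [Function.update_apply, id] at this
  obtain ⟨p₁, p₂⟩ := p
  obtain ⟨q₁, q₂⟩ := q
  simp only [ne_eq, Prod.mk.injEq] at *
  split_ifs at this <;> grind

theorem vandermondePoly_ne_zero : vandermondePoly R n ≠ 0 :=
  prod_ne_zero_iff.mpr fun _ hp => sub_ne_zero.mpr (X_injective.ne (mem_filter.mp hp).2.ne')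

theorem vandermondePoly_dvd_of_antisymm [UniqueFactorizationMonoid R] [CharZero R]
    {P : MvPolynomial (Fin n) R} (hP : ∀ a b : Fin n, a ≠ b → rename (swap a b) P = -P) :
    vandermondePoly R n ∣ P := by
  refine prod_dvd_of_isRelPrime (fun p hp q hq hpq => ?_) fun p hp => ?_
  · simp only [coe_filter, mem_univ, true_and, Set.mem_ofPred_eq] at hp hq
    exact (prime_X_sub_X hp.ne).irreducible.isRelPrime_iff_not_dvd.mpr
      (not_X_sub_X_dvd_X_sub_X hp hq hpq)
  · exact X_sub_X_dvd_of_rename_swap (hP _ _ (mem_filter.mp hp).2.ne)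

end Antisymmetric

section Shuffles

variable {n r : ℕ}

def IsBlockPerm (r : ℕ) (h : Perm (Fin n)) : Prop :=
  ∀ i : Fin n, ((h i : ℕ) < r ↔ (i : ℕ) < r)

instance : DecidablePred (IsBlockPerm (n := n) r) := fun _ => Fintype.decidableForallFintype

theorem isBlockPerm_one : IsBlockPerm r (1 : Perm (Fin n)) := fun _ => Iff.rfl

theorem IsBlockPerm.mul {g h : Perm (Fin n)} (hg : IsBlockPerm r g) (hh : IsBlockPerm r h) :
    IsBlockPerm r (g * h) :=
  fun i => (hg (h i)).trans (hh i)

theorem IsBlockPerm.inv {h : Perm (Fin n)} (hh : IsBlockPerm r h) : IsBlockPerm r h⁻¹ :=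
  fun i => by simpa using (hh (h⁻¹ i)).symm

theorem isBlockPerm_swap {i j : Fin n} (hij : (i : ℕ) < r ↔ (j : ℕ) < r) :
    IsBlockPerm r (swap i j) := by
  intro k
  rcases eq_or_ne k i with rfl | hki
  · simpa using hij.symm
  rcases eq_or_ne k j with rfl | hkj
  · simpa using hij
  · rw [swap_apply_of_ne_of_ne hki hkj]

def permMoment (σ : Perm (Fin n)) : ℤ := ∑ k : Fin n, ((k : ℕ) : ℤ) * (σ k : ℕ)

theorem permMoment_mul_swap (σ : Perm (Fin n)) {i j : Fin n} (hij : i ≠ j) :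
    permMoment (σ * swap i j) = permMoment σ + ((j : ℤ) - i) * ((σ i : ℤ) - σ j) := by
  have hmoved : ∑ k, (((swap i j k : ℕ) : ℤ) - k) * (σ k : ℤ) =
      ((j : ℤ) - i) * σ i + ((i : ℤ) - j) * σ j :=
    (Fintype.sum_eq_add i j hij fun k hk => by
      simp [swap_apply_of_ne_of_ne hk.1 hk.2]).trans (by simp)
  have hreindex : permMoment (σ * swap i j) = ∑ k, ((swap i j k : ℕ) : ℤ) * (σ k : ℤ) := by
    rw [← Equiv.sum_comp (swap i j)]
    simp [permMoment]
  rw [hreindex, permMoment]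
  simp only [sub_mul, sum_sub_distrib] at hmoved
  linear_combination hmoved

theorem exists_mem_shuffles_mul_eq (g : Perm (Fin n)) :
    ∃ σ ∈ shuffles n r, ∃ h, IsBlockPerm r h ∧ σ * h = g := by
  obtain ⟨h₀, hh₀, hmax⟩ := (univ.filter (IsBlockPerm r)).exists_max_image
    (fun h => permMoment (g * h)) ⟨1, mem_filter.mpr ⟨mem_univ _, isBlockPerm_one⟩⟩
  rw [mem_filter] at hh₀
  refine ⟨g * h₀, ?_, h₀⁻¹, hh₀.2.inv, by group⟩
  simp only [shuffles, mem_filter, mem_univ, true_and]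
  intro i j hij hblock
  by_contra hle
  have hlt : (g * h₀) j < (g * h₀) i :=
    lt_of_le_of_ne (not_lt.mp hle) ((g * h₀).injective.ne hij.ne')
  have hswap := hmax (h₀ * swap i j)
    (mem_filter.mpr ⟨mem_univ _, hh₀.2.mul (isBlockPerm_swap (by omega))⟩)
  rw [← mul_assoc, permMoment_mul_swap _ hij.ne] at hswap
  have : 0 < ((j : ℤ) - i) * (((g * h₀) i : ℤ) - (g * h₀) j) :=
    mul_pos (by simpa using hij) (by simpa using hlt)
  omega

theorem eq_one_of_mem_shuffles_of_mul_mem_shuffles {σ h : Perm (Fin n)}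
    (hσ : σ ∈ shuffles n r) (hσh : σ * h ∈ shuffles n r) (hh : IsBlockPerm r h) : h = 1 := by
  simp only [shuffles, mem_filter, mem_univ, true_and] at hσ hσh
  suffices StrictMono h from Equiv.ext (congrFun this.eq_id)
  intro i j hij
  by_contra hle
  have hlt : h j < h i := lt_of_le_of_ne (not_lt.mp hle) (h.injective.ne hij.ne')
  have hi := hh i
  have hj := hh j
  by_cases hblock : (j : ℕ) < r ∨ r ≤ (i : ℕ)
  · exact lt_asymm (hσh i j hij hblock) (hσ (h j) (h i) hlt (by omega))
  · have : (h j : ℕ) < h i := hlt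
    omega

theorem sum_eq_card_smul_sum_shuffles {M : Type*} [AddCommMonoid M] (φ : Perm (Fin n) → M)
    (hφ : ∀ g h, IsBlockPerm r h → φ (g * h) = φ g) :
    ∑ g, φ g = #{h : Perm (Fin n) | IsBlockPerm r h} • ∑ σ ∈ shuffles n r, φ σ := by
  calc ∑ g, φ g = ∑ p ∈ shuffles n r ×ˢ univ.filter (IsBlockPerm r), φ (p.1 * p.2) := by
        refine (sum_bij (fun p _ => p.1 * p.2) (fun _ _ => mem_univ _) ?_ ?_ fun _ _ => rfl).symm
        · rintro ⟨σ, h⟩ hp ⟨σ', h'⟩ hp' (heq : σ * h = σ' * h')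
          simp only [mem_product, mem_filter, mem_univ, true_and] at hp hp'
          have hσ' : σ * (h * h'⁻¹) = σ' := by rw [← mul_assoc, heq, mul_inv_cancel_right]
          have hhh' := eq_one_of_mem_shuffles_of_mul_mem_shuffles hp.1 (hσ' ▸ hp'.1)
            (hp.2.mul hp'.2.inv)
          rw [hhh', mul_one] at hσ'
          rw [mul_inv_eq_one] at hhh'
          rw [hσ', hhh']
        · intro g _
          obtain ⟨σ, hσ, h, hh, rfl⟩ := exists_mem_shuffles_mul_eq (r := r) g
          exact ⟨(σ, h), mem_product.mpr ⟨hσ, mem_filter.mpr ⟨mem_univ _, hh⟩⟩, rfl⟩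
    _ = ∑ σ ∈ shuffles n r, ∑ h ∈ univ.filter (IsBlockPerm r), φ σ := by
        rw [sum_product]
        exact sum_congr rfl fun σ _ => sum_congr rfl fun h hh => hφ σ h (mem_filter.mp hh).2
    _ = _ := by simp only [sum_const, smul_sum]

end Shuffles

section RationalFunctions

variable {n r : ℕ}

local notation "ι" => algebraMap (PolyS n) (FracK n)

theorem permAct_algebraMap (σ : Perm (Fin n)) (p : PolyS n) :
    permAct n σ (ι p) = ι (rename σ p) :=
  IsFractionRing.ringEquivOfRingEquiv_algebraMap _ p

theorem permAct_mul (σ τ : Perm (Fin n)) (x : FracK n) :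
    permAct n (σ * τ) x = permAct n σ (permAct n τ x) := by
  have : (permAct n (σ * τ) : FracK n →+* FracK n) = (permAct n σ : FracK n →+* FracK n).comp
      (permAct n τ : FracK n →+* FracK n) := by
    refine IsLocalization.ringHom_ext (nonZeroDivisors (PolyS n)) (RingHom.ext fun p => ?_)
    simp [permAct_algebraMap, rename_rename]
  exact RingHom.congr_fun this x

theorem euFactor_dvd_vandermondePoly : euFactor n r ∣ vandermondePoly ℚ n :=
  prod_dvd_prod_of_subset _ _ _ fun p hp => by
    simp only [mem_filter, mem_univ, true_and] at hp ⊢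
    exact Fin.lt_def.mpr (by omega)

theorem rename_euFactor_dvd_vandermondePoly (σ : Perm (Fin n)) :
    rename σ (euFactor n r) ∣ vandermondePoly ℚ n := by
  have := map_dvd (rename σ) (euFactor_dvd_vandermondePoly (r := r))
  rwa [rename_vandermondePoly, IsUnit.dvd_mul_left] at this
  exact (Perm.sign σ).isUnit.map (Int.castRingHom _)

theorem rename_euFactor {h : Perm (Fin n)} (hh : IsBlockPerm r h) :
    rename h (euFactor n r) = euFactor n r := by
  rw [euFactor, map_prod]
  simp only [map_sub, rename_X, prod_filter]
  exact Fintype.prod_equiv (h.prodCongr h) _ _ fun p => by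
    simp only [prodCongr_apply, Prod.map_fst, Prod.map_snd, ← not_lt, hh p.1, hh p.2]

theorem permAct_div_euFactor {f : PolyS n} (hf : ∀ h, IsBlockPerm r h → rename h f = f)
    (h : Perm (Fin n)) (hh : IsBlockPerm r h) :
    permAct n h (ι f / ι (euFactor n r)) = ι f / ι (euFactor n r) := by
  rw [map_div₀, permAct_algebraMap, permAct_algebraMap, rename_euFactor hh, hf h hh]

theorem permAct_sum_shuffles {x : FracK n} (hx : ∀ h, IsBlockPerm r h → permAct n h x = x)
    (τ : Perm (Fin n)) :
    permAct n τ (∑ σ ∈ shuffles n r, permAct n σ x) = ∑ σ ∈ shuffles n r, permAct n σ x := by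
  have hcard : #{h : Perm (Fin n) | IsBlockPerm r h} ≠ 0 :=
    card_ne_zero.mpr ⟨1, mem_filter.mpr ⟨mem_univ _, isBlockPerm_one⟩⟩
  refine nsmul_right_injective hcard ?_
  simp only [map_sum, ← permAct_mul]
  rw [← sum_eq_card_smul_sum_shuffles (fun σ => permAct n (τ * σ) x),
    ← sum_eq_card_smul_sum_shuffles (fun σ => permAct n σ x)]
  · exact Equiv.sum_comp (Equiv.mulLeft τ) fun σ => permAct n σ x
  · intro g h hh
    rw [permAct_mul, hx h hh]
  · intro g h hh
    rw [← mul_assoc, permAct_mul, hx h hh]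

theorem exists_algebraMap_eq_sum_mul_vandermondePoly (s : Finset (Perm (Fin n))) (f : PolyS n) :
    ∃ P, ι P = (∑ σ ∈ s, permAct n σ (ι f / ι (euFactor n r))) * ι (vandermondePoly ℚ n) := by
  rw [← RingHom.mem_range, sum_mul]
  refine Subring.sum_mem _ fun σ _ => ?_
  obtain ⟨q, hq⟩ := rename_euFactor_dvd_vandermondePoly (r := r) σ
  have hne : ι (rename σ (euFactor n r)) ≠ 0 :=
    (map_ne_zero_iff _ (IsFractionRing.injective _ _)).mpr
      (ne_zero_of_dvd_ne_zero vandermondePoly_ne_zero ⟨q, hq⟩)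
  refine ⟨rename σ f * q, ?_⟩
  rw [map_div₀, permAct_algebraMap, permAct_algebraMap, hq, map_mul, map_mul]
  field_simp

theorem exists_isSymmetric_algebraMap_eq {S : FracK n} (hS : ∀ τ, permAct n τ S = S)
    {P : PolyS n} (hP : ι P = S * ι (vandermondePoly ℚ n)) :
    ∃ g : PolyS n, g.IsSymmetric ∧ S = ι g := by
  have hinj : Function.Injective ι := IsFractionRing.injective (PolyS n) (FracK n)
  have hanti : ∀ a b : Fin n, a ≠ b → rename (swap a b) P = -P := fun a b hab => hinj <| by
    rw [← permAct_algebraMap, hP, map_mul, hS, permAct_algebraMap, rename_vandermondePoly,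
      Perm.sign_swap hab]
    simp [hP]
  obtain ⟨g, rfl⟩ := vandermondePoly_dvd_of_antisymm hanti
  have hV : ι (vandermondePoly ℚ n) ≠ 0 := (map_ne_zero_iff _ hinj).mpr vandermondePoly_ne_zero
  have hSg : S = ι g := mul_right_cancel₀ hV (by rw [← hP, map_mul, mul_comm])
  refine ⟨g, fun τ => hinj ?_, hSg⟩
  rw [← permAct_algebraMap, ← hSg, hS]

end RationalFunctions

theorem stmt_4_general (n r : ℕ) (f : PolyS n)
    (hf : ∀ σ : Perm (Fin n),
      (∀ i : Fin n, (i : ℕ) < r → ((σ i : ℕ) < r)) → rename ⇑σ f = f) :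
    ∃ g : PolyS n, g.IsSymmetric ∧
      ∑ σ ∈ shuffles n r,
          permAct n σ (algebraMap (PolyS n) (FracK n) f
            / algebraMap (PolyS n) (FracK n) (euFactor n r))
        = algebraMap (PolyS n) (FracK n) g := by
  have hfH : ∀ h, IsBlockPerm r h → rename h f = f := fun h hh => hf h fun i => (hh i).mpr
  obtain ⟨P, hP⟩ := exists_algebraMap_eq_sum_mul_vandermondePoly (shuffles n r) f
  exact exists_isSymmetric_algebraMap_eq (permAct_sum_shuffles (permAct_div_euFactor hfH)) hP

/-- The shuffle-sum `∑_{σ ∈ Sh(r,n-r)} σ(f/∏(λᵢ-λⱼ))` of a `𝔖ᵣ×𝔖_{n-r}`-invariant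
polynomial is a polynomial, symmetric under the full `𝔖ₙ`. -/
theorem stmt_4 (n r : ℕ) (hr : r ≤ n) (f : PolyS n)
    (hf : ∀ σ : Perm (Fin n),
      (∀ i : Fin n, (i : ℕ) < r → ((σ i : ℕ) < r)) → rename ⇑σ f = f) :
    ∃ g : PolyS n, g.IsSymmetric ∧
      ∑ σ ∈ shuffles n r,
          permAct n σ (algebraMap (PolyS n) (FracK n) f
            / algebraMap (PolyS n) (FracK n) (euFactor n r))
        = algebraMap (PolyS n) (FracK n) g :=
  stmt_4_general n r f hf

end
end

section
/- Let S = ℚ[λ₁,…,λₙ] with its 𝔖ₙ-action, e_triv and e_sign the trivial and sign idempotents in ℚ[𝔖ₙ] ⊆ S ⋊ 𝔖ₙ. Then the functor M ↦ Hom_{S⋊𝔖ₙ}(P_sign, P_triv ⊗_{S^{𝔖ₙ}} M) from S^{𝔖ₙ}-modules to End(P_sign)-modules, where P_triv = (S⋊𝔖ₙ)e_triv and P_sign = (S⋊𝔖ₙ)e_sign, is naturally isomorphic to the functor M ↦ M ⊗_ℚ ε, where ε is the one-dimensional sign representation; in particular applied to M = S^{𝔖ₙ} it produces the space of skew-symmetric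 elements (S ⊗ ε)^{𝔖ₙ}. -/
open MvPolynomial Equiv TensorProduct

noncomputable section

/-- The Vandermonde determinant `Δ = ∏_{i<j}(λⱼ - λᵢ)`. -/
def vandermonde (n : ℕ) : MvPolynomial (Fin n) ℚ :=
  ∏ p ∈ Finset.univ.filter (fun p : Fin n × Fin n => p.1 < p.2), (X p.2 - X p.1)

/-- The action of `σ ∈ 𝔖ₙ` on `S = ℚ[λ₁,…,λₙ]`, as a linear map over the invariant
subring `S^{𝔖ₙ}`. -/
def renameLin (n : ℕ) (σ : Perm (Fin n)) :
    MvPolynomial (Fin n) ℚ →ₗ[symmetricSubalgebra (Fin n) ℚ] MvPolynomial (Fin n) ℚ where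
  toFun := rename ⇑σ
  map_add' := map_add _
  map_smul' := by
    intro r f
    simp only [RingHom.id_apply, Algebra.smul_def]
    rw [map_mul]
    congr 1
    exact r.2 σ

/-!
Every `σ ∈ 𝔖ₙ` multiplies `Δ` by `sign σ`. A skew-symmetric polynomial vanishes modulo each
prime `λⱼ - λᵢ` (the transposition `(i j)` acts trivially modulo it, and `2` is invertible), and
these primes are pairwise non-associate, so it is divisible by `Δ` with symmetric quotient:
multiplication by `Δ` identifies `S^{𝔖ₙ}` with the skew-symmetric polynomials.

Dividing the antisymmetrizer `∑ σ, sign σ • σ` by `Δ` therefore gives an `S^{𝔖ₙ}`-linear map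
`∂ : S → S^{𝔖ₙ}` with `∂ Δ = n!`. On `S ⊗ M` the antisymmetrizer becomes `z ↦ Δ ⊗ (∂ ⊗ 1) z`,
and on the sign-isotypic part it is multiplication by the unit `n!`. Hence `(1/n!) (∂ ⊗ 1)`
retracts `m ↦ Δ ⊗ m`, and every sign-isotypic `z` equals `Δ ⊗ (1/n!) (∂ ⊗ 1) z`.
-/

namespace MvPolynomial

variable {σ R : Type*} [CommRing R]

lemma mkₐ_comp_rename_swap [DecidableEq σ] (i j : σ) :
    (Ideal.Quotient.mkₐ R (Ideal.span {X i - X j})).comp (rename (swap i j)) =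
      Ideal.Quotient.mkₐ R (Ideal.span {(X i - X j : MvPolynomial σ R)}) := by
  have hij : Ideal.Quotient.mk (Ideal.span {(X i - X j : MvPolynomial σ R)}) (X i) =
      Ideal.Quotient.mk _ (X j) :=
    Ideal.Quotient.eq.2 (Ideal.mem_span_singleton_self _)
  ext k
  simp only [AlgHom.comp_apply, rename_X, Ideal.Quotient.mkₐ_eq_mk]
  rcases eq_or_ne k i with rfl | hki
  · simp [hij]
  rcases eq_or_ne k j with rfl | hkj
  · simp [hij]
  · rw [swap_apply_of_ne_of_ne hki hkj]

lemma X_sub_X_dvd_of_rename_swap_eq_neg [DecidableEq σ] [Invertible (2 : R)] {i j : σ}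
    {f : MvPolynomial σ R} (hf : rename (swap i j) f = -f) : X i - X j ∣ f := by
  set π := Ideal.Quotient.mkₐ R (Ideal.span {(X i - X j : MvPolynomial σ R)})
  have hπ : π f = -π f := by
    rw [← map_neg, ← hf, ← AlgHom.comp_apply, mkₐ_comp_rename_swap]
  have h2 : (2 : R) • π f = 0 := by
    rw [two_smul]; nth_rewrite 1 [hπ]; exact neg_add_cancel _
  rw [← Ideal.mem_span_singleton, ← Ideal.Quotient.eq_zero_iff_mem]
  simpa [smul_smul, π] using congr((⅟2 : R) • $h2)

lemma irreducible_X_sub_X [IsDomain R] {i j : σ} (hij : i ≠ j) :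
    Irreducible (X i - X j : MvPolynomial σ R) := by
  classical
  simpa [sub_eq_add_neg] using irreducible_mul_X_add (1 : MvPolynomial σ R) (-X j) i
    one_ne_zero (by simp) (by simp [vars_neg, hij]) isRelPrime_one_left

lemma X_sub_X_not_dvd [Nontrivial R] {a b c d : σ} (hcd : c ≠ d) (hca : c ≠ a) (hcb : c ≠ b) :
    ¬ (X a - X b : MvPolynomial σ R) ∣ X c - X d := by
  classical
  intro h
  simpa [Pi.single_apply, hca.symm, hcb.symm, hcd.symm] using
    map_dvd (eval (Pi.single c (1 : R))) h

lemma X_sub_X_not_dvd_of_lt [LinearOrder σ] [Nontrivial R] {p q : σ × σ} (hp : p.1 < p.2)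
    (hq : q.1 < q.2) (hpq : p ≠ q) : ¬ (X p.2 - X p.1 : MvPolynomial σ R) ∣ X q.2 - X q.1 := by
  by_cases h2 : q.2 ≠ p.2 ∧ q.2 ≠ p.1
  · exact X_sub_X_not_dvd hq.ne' h2.1 h2.2
  by_cases h1 : q.1 ≠ p.2 ∧ q.1 ≠ p.1
  · rw [← dvd_neg, neg_sub]
    exact X_sub_X_not_dvd hq.ne h1.1 h1.2
  refine absurd ?_ hpq
  grind

end MvPolynomial

lemma Int.cast_units_mul_self {R : Type*} [Ring R] (u : ℤˣ) : ((u : ℤ) : R) * (u : ℤ) = 1 := by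
  rw [← Int.cast_mul, ← Units.val_mul, Int.units_mul_self, Units.val_one, Int.cast_one]

lemma Int.cast_units_ne_zero {R : Type*} [Ring R] [Nontrivial R] (u : ℤˣ) : ((u : ℤ) : R) ≠ 0 := by
  rcases Int.units_eq_one_or u with rfl | rfl <;> simp

lemma vandermonde_eq_det (n : ℕ) :
    vandermonde n = (Matrix.vandermonde fun i : Fin n => (X i : MvPolynomial (Fin n) ℚ)).det := by
  rw [Matrix.det_vandermonde, vandermonde, Finset.prod_sigma']
  refine Finset.prod_bij' (fun p _ => ⟨p.1, p.2⟩) (fun x _ => (x.1, x.2)) ?_ ?_ ?_ ?_ ?_ <;>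
    simp [Finset.mem_Ioi]

lemma rename_vandermonde (n : ℕ) (σ : Perm (Fin n)) :
    rename σ (vandermonde n) = ((Perm.sign σ : ℤ) : MvPolynomial (Fin n) ℚ) * vandermonde n := by
  have hmap : (Matrix.vandermonde fun i : Fin n => (X i : MvPolynomial (Fin n) ℚ)).map (rename σ) =
      (Matrix.vandermonde fun i : Fin n => (X i : MvPolynomial (Fin n) ℚ)).submatrix σ id := by
    ext i j
    simp [Matrix.vandermonde]
  rw [vandermonde_eq_det, AlgHom.map_det, AlgHom.mapMatrix_apply, hmap, Matrix.det_permute]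

lemma vandermonde_ne_zero (n : ℕ) : vandermonde n ≠ 0 :=
  Finset.prod_ne_zero_iff.2 fun _ hp =>
    sub_ne_zero.2 fun h => (Finset.mem_filter.1 hp).2.ne' (X_injective h)

lemma vandermonde_dvd_of_rename_eq_sign_mul {n : ℕ} {f : MvPolynomial (Fin n) ℚ}
    (hf : ∀ σ : Perm (Fin n), rename σ f = ((Perm.sign σ : ℤ) : MvPolynomial (Fin n) ℚ) * f) :
    vandermonde n ∣ f := by
  refine Finset.prod_dvd_of_isRelPrime (fun p hp q hq hpq => ?_) fun p hp => ?_
  · have hp := (Finset.mem_filter.1 hp).2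
    have hq := (Finset.mem_filter.1 hq).2
    exact ((irreducible_X_sub_X hp.ne').isRelPrime_iff_not_dvd).2 (X_sub_X_not_dvd_of_lt hp hq hpq)
  · have hp := (Finset.mem_filter.1 hp).2
    refine X_sub_X_dvd_of_rename_swap_eq_neg ?_
    simp [hf, Perm.sign_swap hp.ne']

lemma isSymmetric_of_rename_mul_vandermonde {n : ℕ} {f : MvPolynomial (Fin n) ℚ}
    (hf : ∀ σ : Perm (Fin n), rename σ (f * vandermonde n) =
      ((Perm.sign σ : ℤ) : MvPolynomial (Fin n) ℚ) * (f * vandermonde n)) :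
    f.IsSymmetric := fun σ => by
  refine mul_right_cancel₀
    (mul_ne_zero (Int.cast_units_ne_zero (Perm.sign σ)) (vandermonde_ne_zero n)) ?_
  have h := hf σ
  rw [map_mul, rename_vandermonde] at h
  linear_combination h

lemma bijOn_mul_vandermonde (n : ℕ) :
    Set.BijOn (· * vandermonde n) {f : MvPolynomial (Fin n) ℚ | f.IsSymmetric}
      {f | ∀ σ : Perm (Fin n), rename σ f = ((Perm.sign σ : ℤ) : MvPolynomial (Fin n) ℚ) * f} := by
  refine ⟨fun f hf σ => ?_, fun f _ g _ h => mul_right_cancel₀ (vandermonde_ne_zero n) h,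
    fun f hf => ?_⟩
  · rw [map_mul, hf σ, rename_vandermonde, mul_left_comm]
  · obtain ⟨g, rfl⟩ := vandermonde_dvd_of_rename_eq_sign_mul hf
    rw [mul_comm] at hf
    exact ⟨g, isSymmetric_of_rename_mul_vandermonde hf, mul_comm _ _⟩

lemma renameLin_apply (n : ℕ) (σ : Perm (Fin n)) (f : MvPolynomial (Fin n) ℚ) :
    renameLin n σ f = rename σ f := rfl

def skewSymmetric (n : ℕ) :
    Submodule (symmetricSubalgebra (Fin n) ℚ) (MvPolynomial (Fin n) ℚ) where
  carrier := {f | ∀ σ : Perm (Fin n), rename σ f = ((Perm.sign σ : ℤ) : MvPolynomial (Fin n) ℚ) * f}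
  add_mem' hf hg σ := by rw [map_add, hf σ, hg σ, mul_add]
  zero_mem' σ := by rw [map_zero, mul_zero]
  smul_mem' r f hf σ := by
    rw [Algebra.smul_def, map_mul, hf σ, mul_left_comm]
    congr 2
    exact r.2 σ

def antisymmetrize (n : ℕ) :
    MvPolynomial (Fin n) ℚ →ₗ[symmetricSubalgebra (Fin n) ℚ] skewSymmetric n :=
  LinearMap.codRestrict _ (∑ σ : Perm (Fin n), (Perm.sign σ : ℤ) • renameLin n σ) fun f τ => by
    simp only [LinearMap.sum_apply, LinearMap.smul_apply, renameLin_apply,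
      map_sum, map_zsmul, rename_rename, Finset.mul_sum]
    refine Fintype.sum_equiv (Equiv.mulLeft τ) _ _ fun σ => ?_
    rw [Equiv.coe_mulLeft, Perm.coe_mul, Perm.sign_mul, zsmul_eq_mul, zsmul_eq_mul, Units.val_mul,
      Int.cast_mul, ← mul_assoc, ← mul_assoc, Int.cast_units_mul_self, one_mul]

lemma coe_antisymmetrize (n : ℕ) (f : MvPolynomial (Fin n) ℚ) :
    (antisymmetrize n f : MvPolynomial (Fin n) ℚ) =
      ∑ σ : Perm (Fin n), (Perm.sign σ : ℤ) • rename σ f := by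
  simp [antisymmetrize, renameLin_apply]

def vandermondeMulEquiv (n : ℕ) :
    symmetricSubalgebra (Fin n) ℚ ≃ₗ[symmetricSubalgebra (Fin n) ℚ] skewSymmetric n :=
  LinearEquiv.ofBijective
    (LinearMap.codRestrict _ (LinearMap.toSpanSingleton _ _ (vandermonde n)) fun r =>
      (bijOn_mul_vandermonde n).mapsTo ((mem_symmetricSubalgebra _).1 r.2))
    ⟨fun r s h => Subtype.ext <| mul_right_cancel₀ (vandermonde_ne_zero n) congr(($h).1),
      fun f => by
        obtain ⟨g, hg, hgf⟩ := (bijOn_mul_vandermonde n).surjOn f.2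
        exact ⟨⟨g, (mem_symmetricSubalgebra _).2 hg⟩, Subtype.ext hgf⟩⟩

lemma coe_vandermondeMulEquiv (n : ℕ) (r : symmetricSubalgebra (Fin n) ℚ) :
    (vandermondeMulEquiv n r : MvPolynomial (Fin n) ℚ) = r • vandermonde n := rfl

/-- The divided difference operator `∂_{w₀} f = (∑ σ, sign σ • σ f) / Δ` of the longest
permutation. -/
def longestDivDiff (n : ℕ) :
    MvPolynomial (Fin n) ℚ →ₗ[symmetricSubalgebra (Fin n) ℚ] symmetricSubalgebra (Fin n) ℚ :=
  (vandermondeMulEquiv n).symm.toLinearMap ∘ₗ antisymmetrize n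

lemma longestDivDiff_smul_vandermonde (n : ℕ) (f : MvPolynomial (Fin n) ℚ) :
    longestDivDiff n f • vandermonde n = ∑ σ : Perm (Fin n), (Perm.sign σ : ℤ) • rename σ f := by
  rw [← coe_antisymmetrize, ← coe_vandermondeMulEquiv, longestDivDiff, LinearMap.comp_apply,
    LinearEquiv.coe_coe, LinearEquiv.apply_symm_apply]

lemma longestDivDiff_vandermonde (n : ℕ) :
    longestDivDiff n (vandermonde n) = Fintype.card (Perm (Fin n)) := by
  rw [longestDivDiff, LinearMap.comp_apply, LinearEquiv.coe_coe, LinearEquiv.symm_apply_eq]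
  refine Subtype.ext ?_
  rw [coe_antisymmetrize, coe_vandermondeMulEquiv, Nat.cast_smul_eq_nsmul, ← Finset.card_univ,
    ← Finset.sum_const]
  refine Finset.sum_congr rfl fun σ _ => ?_
  rw [rename_vandermonde, zsmul_eq_mul, ← mul_assoc, Int.cast_units_mul_self, one_mul]

section TensorProduct

variable {n : ℕ} (M : Type*) [AddCommGroup M] [Module (symmetricSubalgebra (Fin n) ℚ) M]

lemma sum_sign_smul_rTensor_renameLin
    (z : MvPolynomial (Fin n) ℚ ⊗[symmetricSubalgebra (Fin n) ℚ] M) :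
    ∑ σ : Perm (Fin n), (Perm.sign σ : ℤ) • LinearMap.rTensor M (renameLin n σ) z =
      vandermonde n ⊗ₜ TensorProduct.lid _ M (LinearMap.rTensor M (longestDivDiff n) z) := by
  induction z using TensorProduct.induction_on with
  | zero => simp
  | tmul f m =>
    simp only [LinearMap.rTensor_tmul, TensorProduct.lid_tmul, ← TensorProduct.smul_tmul,
      longestDivDiff_smul_vandermonde, TensorProduct.sum_tmul, TensorProduct.smul_tmul',
      renameLin_apply]
  | add x y hx hy =>
    simp only [map_add, smul_add, Finset.sum_add_distrib, hx, hy, TensorProduct.tmul_add]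

lemma lid_rTensor_longestDivDiff_vandermonde_tmul (m : M) :
    TensorProduct.lid _ M (LinearMap.rTensor M (longestDivDiff n) (vandermonde n ⊗ₜ m)) =
      (Fintype.card (Perm (Fin n)) : symmetricSubalgebra (Fin n) ℚ) • m := by
  rw [LinearMap.rTensor_tmul, TensorProduct.lid_tmul, longestDivDiff_vandermonde]

variable (n) in
lemma isUnit_card_perm :
    IsUnit (Fintype.card (Perm (Fin n)) : symmetricSubalgebra (Fin n) ℚ) := by
  rw [← map_natCast (algebraMap ℚ _)]
  exact (Nat.cast_ne_zero.2 Fintype.card_ne_zero).isUnit.map _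

lemma vandermonde_tmul_injective :
    Function.Injective fun m : M => vandermonde n ⊗ₜ[symmetricSubalgebra (Fin n) ℚ] m := by
  intro a b h
  have h' := congr(TensorProduct.lid _ M (LinearMap.rTensor M (longestDivDiff n) $h))
  simp only [lid_rTensor_longestDivDiff_vandermonde_tmul] at h'
  exact (isUnit_card_perm n).smul_left_cancel.1 h'

lemma range_vandermonde_tmul :
    Set.range (fun m : M => vandermonde n ⊗ₜ[symmetricSubalgebra (Fin n) ℚ] m) =
      {z | ∀ σ : Perm (Fin n), LinearMap.rTensor M (renameLin n σ) z = (Perm.sign σ : ℤ) • z} := by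
  ext z
  constructor
  · rintro ⟨m, rfl⟩ σ
    rw [LinearMap.rTensor_tmul, renameLin_apply, rename_vandermonde, ← zsmul_eq_mul,
      TensorProduct.smul_tmul']
  · intro hz
    set w := TensorProduct.lid _ M (LinearMap.rTensor M (longestDivDiff n) z)
    have hcard : (Fintype.card (Perm (Fin n)) : symmetricSubalgebra (Fin n) ℚ) • z =
        vandermonde n ⊗ₜ w := by
      rw [← sum_sign_smul_rTensor_renameLin, Nat.cast_smul_eq_nsmul, ← Finset.card_univ,
        ← Finset.sum_const]
      refine Finset.sum_congr rfl fun σ _ => ?_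
      rw [hz σ, smul_smul, ← Units.val_mul, Int.units_mul_self, Units.val_one, one_smul]
    obtain ⟨u, hu⟩ := isUnit_card_perm n
    refine ⟨(↑u⁻¹ : symmetricSubalgebra (Fin n) ℚ) • w, ?_⟩
    change vandermonde n ⊗ₜ _ = z
    rw [TensorProduct.tmul_smul, ← hcard, ← hu]
    exact inv_smul_smul u z

end TensorProduct

/-- The functor `M ↦ Hom_{S⋊𝔖ₙ}(P_sign, P_triv ⊗_{S^{𝔖ₙ}} M)`, computed as the
sign-isotypic part of `S ⊗_{S^{𝔖ₙ}} M`, is naturally isomorphic to `M ⊗ ε`: concretely,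
`m ↦ Δ ⊗ m` is a natural injection of `M` onto the sign-isotypic part; applied to
`M = S^{𝔖ₙ}` it produces exactly the skew-symmetric polynomials. -/
theorem stmt_19 (n : ℕ) :
    (∀ (M : Type) [AddCommGroup M] [Module (symmetricSubalgebra (Fin n) ℚ) M],
      Function.Injective
        (fun m : M => (vandermonde n) ⊗ₜ[symmetricSubalgebra (Fin n) ℚ] m)
      ∧ Set.range (fun m : M => (vandermonde n) ⊗ₜ[symmetricSubalgebra (Fin n) ℚ] m)
          = {z : MvPolynomial (Fin n) ℚ ⊗[symmetricSubalgebra (Fin n) ℚ] M |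
              ∀ σ : Perm (Fin n),
                LinearMap.rTensor M (renameLin n σ) z = (Perm.sign σ : ℤ) • z}
      ∧ ∀ (N : Type) [AddCommGroup N] [Module (symmetricSubalgebra (Fin n) ℚ) N]
          (φ : M →ₗ[symmetricSubalgebra (Fin n) ℚ] N) (m : M),
          LinearMap.lTensor (MvPolynomial (Fin n) ℚ) φ
              ((vandermonde n) ⊗ₜ[symmetricSubalgebra (Fin n) ℚ] m)
            = (vandermonde n) ⊗ₜ[symmetricSubalgebra (Fin n) ℚ] (φ m))
    ∧ Set.BijOn (fun f => f * vandermonde n)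
        {f : MvPolynomial (Fin n) ℚ | f.IsSymmetric}
        {f : MvPolynomial (Fin n) ℚ |
          ∀ σ : Perm (Fin n),
            rename ⇑σ f = ((Perm.sign σ : ℤ) : MvPolynomial (Fin n) ℚ) * f} := by
  exact ⟨fun M _ _ => ⟨vandermonde_tmul_injective M, range_vandermonde_tmul M,
    fun N _ _ φ m => LinearMap.lTensor_tmul _ φ _ m⟩, bijOn_mul_vandermonde n⟩

end
end
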